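/- arXiv:1601.08008 — 2 statements merged into one kernel-verified Lean document; each statement's English description precedes it below -/
import Mathlib

section
/- For fixed t > 0 and g ∈ L¹([0,t]), the function h(k,t) := ∫₀ᵗ e^{ik²(τ−t)} g(τ) dτ tends to 0 as |k| → ∞ within the open quadrant {k ∈ ℂ : Re k > 0, Im k < 0}. -/
/-!
On the closed lower half-plane `Im z ≤ 0` the kernel `e^{iz(τ-t)}`, `τ ≤ t`, has modulus at most
`1`, so `g ↦ ∫₀ᵗ e^{iz(τ-t)} g(τ) dτ` is bounded by `‖g‖_{L¹}` uniformly in `z`. For `C¹` data an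
integration by parts makes the integral `O(1/|z|)`, and smooth functions are dense in `L¹`, so the
integral tends to `0` as `|z| → ∞` in the half-plane. Finally `k ↦ k²` maps the quadrant
`Re k > 0, Im k < 0` into that half-plane.
-/

open MeasureTheory Filter Complex intervalIntegral Bornology Set Topology
open scoped ContDiff

section

variable {t : ℝ} {z : ℂ}

lemma norm_cexp_I_mul_sub_le_one (hz : z.im ≤ 0) {τ : ℝ} (hτ : τ ≤ t) :
    ‖cexp (I * z * (τ - t))‖ ≤ 1 := by
  have hre : (I * z * ((τ : ℂ) - t)).re = -z.im * (τ - t) := by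
    simp [mul_re, mul_im]
  rw [norm_exp, hre, Real.exp_le_one_iff]
  exact mul_nonpos_of_nonneg_of_nonpos (neg_nonneg.2 hz) (sub_nonpos.2 hτ)

lemma hasDerivAt_cexp_I_mul_sub_div (hz : z ≠ 0) (x : ℝ) :
    HasDerivAt (fun τ : ℝ => cexp (I * z * (τ - t)) / (I * z)) (cexp (I * z * (x - t))) x := by
  have hlin : HasDerivAt (fun τ : ℝ => I * z * ((τ : ℂ) - t)) (I * z) x := by
    simpa using ((hasDerivAt_id (x : ℂ)).sub_const (t : ℂ)).const_mul (I * z) |>.comp_ofReal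
  simpa [mul_div_cancel_right₀ _ (mul_ne_zero I_ne_zero hz)] using hlin.cexp.div_const (I * z)

lemma continuous_cexp_I_mul_sub : Continuous fun τ : ℝ => cexp (I * z * (τ - t)) := by
  fun_prop

noncomputable def expKernelIntegral (t : ℝ) (z : ℂ) (g : ℝ → ℂ) : ℂ :=
  ∫ τ in (0 : ℝ)..t, cexp (I * z * (τ - t)) * g τ

lemma intervalIntegrable_cexp_I_mul_sub_mul {g : ℝ → ℂ} (hg : IntervalIntegrable g volume 0 t) :
    IntervalIntegrable (fun τ : ℝ => cexp (I * z * (τ - t)) * g τ) volume 0 t :=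
  hg.continuousOn_mul continuous_cexp_I_mul_sub.continuousOn

lemma expKernelIntegral_sub {f g : ℝ → ℂ} (hf : IntervalIntegrable f volume 0 t)
    (hg : IntervalIntegrable g volume 0 t) :
    expKernelIntegral t z f - expKernelIntegral t z g = expKernelIntegral t z (f - g) := by
  rw [expKernelIntegral, expKernelIntegral, expKernelIntegral, ← integral_sub
    (intervalIntegrable_cexp_I_mul_sub_mul hf) (intervalIntegrable_cexp_I_mul_sub_mul hg)]
  congr 1 with τ
  exact (mul_sub _ _ _).symm

lemma norm_expKernelIntegral_le (ht : 0 ≤ t) (hz : z.im ≤ 0) {g : ℝ → ℂ}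
    (hg : IntervalIntegrable g volume 0 t) :
    ‖expKernelIntegral t z g‖ ≤ ∫ τ in (0 : ℝ)..t, ‖g τ‖ := by
  refine norm_integral_le_of_norm_le ht (.of_forall fun τ hτ => ?_) hg.norm
  rw [norm_mul]
  exact mul_le_of_le_one_left (norm_nonneg _) (norm_cexp_I_mul_sub_le_one hz hτ.2)

lemma norm_expKernelIntegral_le_of_hasDerivAt (ht : 0 ≤ t) (hz : z.im ≤ 0) (hz0 : z ≠ 0)
    {φ φ' : ℝ → ℂ} (hφ : ∀ x, HasDerivAt φ (φ' x) x) (hφ' : IntervalIntegrable φ' volume 0 t) :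
    ‖expKernelIntegral t z φ‖ ≤ (‖φ t‖ + ‖φ 0‖ + ∫ τ in (0 : ℝ)..t, ‖φ' τ‖) / ‖z‖ := by
  set v : ℝ → ℂ := fun τ => cexp (I * z * (τ - t)) / (I * z)
  have hv : ∀ τ ≤ t, ‖v τ‖ ≤ ‖z‖⁻¹ := fun τ hτ => by
    simpa [v, norm_div, div_eq_inv_mul] using
      mul_le_of_le_one_right (inv_nonneg.2 (norm_nonneg z)) (norm_cexp_I_mul_sub_le_one hz hτ)
  have hparts :
      expKernelIntegral t z φ = φ t * v t - φ 0 * v 0 - ∫ τ in (0 : ℝ)..t, φ' τ * v τ := by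
    rw [← integral_mul_deriv_eq_deriv_mul (fun x _ => hφ x)
      (fun x _ => hasDerivAt_cexp_I_mul_sub_div hz0 x) hφ'
      (continuous_cexp_I_mul_sub.intervalIntegrable 0 t)]
    simp only [expKernelIntegral, mul_comm]
  have hrest : ‖∫ τ in (0 : ℝ)..t, φ' τ * v τ‖ ≤ (∫ τ in (0 : ℝ)..t, ‖φ' τ‖) * ‖z‖⁻¹ := by
    rw [← intervalIntegral.integral_mul_const]
    refine norm_integral_le_of_norm_le ht (.of_forall fun τ hτ => ?_) (hφ'.norm.mul_const _)
    rw [norm_mul]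
    exact mul_le_mul_of_nonneg_left (hv τ hτ.2) (norm_nonneg _)
  calc ‖expKernelIntegral t z φ‖
      ≤ ‖φ t‖ * ‖v t‖ + ‖φ 0‖ * ‖v 0‖ + ‖∫ τ in (0 : ℝ)..t, φ' τ * v τ‖ := by
        rw [hparts, ← norm_mul, ← norm_mul]
        exact (norm_sub_le _ _).trans (add_le_add_left (norm_sub_le _ _) _)
    _ ≤ ‖φ t‖ * ‖z‖⁻¹ + ‖φ 0‖ * ‖z‖⁻¹ + (∫ τ in (0 : ℝ)..t, ‖φ' τ‖) * ‖z‖⁻¹ := by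
        gcongr
        · exact hv t le_rfl
        · exact hv 0 ht
    _ = _ := by ring

lemma tendsto_expKernelIntegral_of_contDiff (ht : 0 ≤ t) {φ : ℝ → ℂ} (hφ : ContDiff ℝ 1 φ) :
    Tendsto (fun z => expKernelIntegral t z φ) (cobounded ℂ ⊓ 𝓟 {z | z.im ≤ 0}) (𝓝 0) := by
  set C := ‖φ t‖ + ‖φ 0‖ + ∫ τ in (0 : ℝ)..t, ‖deriv φ τ‖
  have hbound :
      ∀ᶠ z in cobounded ℂ ⊓ 𝓟 {z | z.im ≤ 0}, ‖expKernelIntegral t z φ‖ ≤ C * ‖z‖⁻¹ := by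
    filter_upwards [inf_le_left (b := 𝓟 {z : ℂ | z.im ≤ 0}) (eventually_ne_cobounded 0),
      inf_le_right (a := cobounded ℂ) (mem_principal_self _)] with z hz0 hz
    rw [← div_eq_mul_inv]
    exact norm_expKernelIntegral_le_of_hasDerivAt ht hz hz0
      (fun x => (hφ.differentiable one_ne_zero x).hasDerivAt)
      ((hφ.continuous_deriv le_rfl).intervalIntegrable 0 t)
  have hdecay : Tendsto (fun z : ℂ => C * ‖z‖⁻¹) (cobounded ℂ) (𝓝 0) := by
    simpa using (tendsto_inv_atTop_zero.comp tendsto_norm_cobounded_atTop).const_mul C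
  exact squeeze_zero_norm' hbound (hdecay.mono_left inf_le_left)

end

lemma IntervalIntegrable.exists_contDiff_integral_norm_sub_le {E : Type*} [NormedAddCommGroup E]
    [NormedSpace ℝ E] {a b : ℝ} (hab : a ≤ b) {g : ℝ → E} (hg : IntervalIntegrable g volume a b)
    {ε : ℝ} (hε : 0 < ε) :
    ∃ φ : ℝ → E, ContDiff ℝ ∞ φ ∧ ∫ x in a..b, ‖g x - φ x‖ ≤ ε := by
  obtain ⟨φ, -, hφ, hclose⟩ := (memLp_one_iff_integrable.2 hg.1).exist_eLpNorm_sub_le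
    ENNReal.one_ne_top le_rfl hε
  refine ⟨φ, hφ, ?_⟩
  change ∫ x in a..b, ‖(g - φ) x‖ ≤ ε
  rw [integral_of_le hab, integral_norm_eq_lintegral_enorm
    (hg.1.aestronglyMeasurable.sub hφ.continuous.aestronglyMeasurable),
    ← eLpNorm_one_eq_lintegral_enorm]
  exact ENNReal.toReal_le_of_le_ofReal hε.le hclose

lemma tendsto_expKernelIntegral {t : ℝ} (ht : 0 ≤ t) {g : ℝ → ℂ}
    (hg : IntervalIntegrable g volume 0 t) :
    Tendsto (fun z => expKernelIntegral t z g) (cobounded ℂ ⊓ 𝓟 {z | z.im ≤ 0}) (𝓝 0) := by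
  rw [NormedAddGroup.tendsto_nhds_zero]
  intro ε hε
  obtain ⟨φ, hφ, hclose⟩ := hg.exists_contDiff_integral_norm_sub_le ht (half_pos hε)
  have hφi : IntervalIntegrable φ volume 0 t := hφ.continuous.intervalIntegrable 0 t
  filter_upwards [(NormedAddGroup.tendsto_nhds_zero.1
      (tendsto_expKernelIntegral_of_contDiff ht (hφ.of_le (by simp)))) _ (half_pos hε),
    inf_le_right (a := cobounded ℂ) (mem_principal_self _)] with z hzφ hz
  calc ‖expKernelIntegral t z g‖
      = ‖expKernelIntegral t z (g - φ) + expKernelIntegral t z φ‖ := by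
        rw [← expKernelIntegral_sub hg hφi, sub_add_cancel]
    _ ≤ (∫ τ in (0 : ℝ)..t, ‖g τ - φ τ‖) + ‖expKernelIntegral t z φ‖ :=
        (norm_add_le _ _).trans (add_le_add_left (norm_expKernelIntegral_le ht hz (hg.sub hφi)) _)
    _ < ε / 2 + ε / 2 := add_lt_add_of_le_of_lt hclose hzφ
    _ = ε := add_halves ε

lemma tendsto_sq_cobounded_inf_quadrant :
    Tendsto (fun k : ℂ => k ^ 2) (cobounded ℂ ⊓ 𝓟 {k : ℂ | 0 ≤ k.re ∧ k.im ≤ 0})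
      (cobounded ℂ ⊓ 𝓟 {z | z.im ≤ 0}) := by
  refine (tendsto_pow_cobounded_cobounded two_ne_zero).inf
    (tendsto_principal_principal.2 fun k hk => ?_)
  simp only [mem_ofPred_eq, sq, mul_im] at hk ⊢
  linarith [mul_nonpos_of_nonneg_of_nonpos hk.1 hk.2]

/-- For fixed `t > 0` and `g ∈ L¹([0,t])`, the function
`h(k,t) = ∫₀ᵗ e^{ik²(τ-t)} g(τ) dτ` tends to `0` as `|k| → ∞` within the open
quadrant `{Re k > 0, Im k < 0}`. -/
theorem h_decay_in_quadrant (t : ℝ) (ht : 0 < t) (g : ℝ → ℂ)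
    (hg : IntegrableOn g (Set.Icc 0 t)) :
    Tendsto
      (fun k : ℂ => ∫ τ in (0:ℝ)..t,
        Complex.exp (Complex.I * k ^ 2 * ((τ : ℂ) - (t : ℂ))) * g τ)
      (Bornology.cobounded ℂ ⊓ Filter.principal {k : ℂ | 0 < k.re ∧ k.im < 0})
      (nhds 0) := by
  have hquadrant : cobounded ℂ ⊓ 𝓟 {k : ℂ | 0 < k.re ∧ k.im < 0} ≤
      cobounded ℂ ⊓ 𝓟 {k : ℂ | 0 ≤ k.re ∧ k.im ≤ 0} :=
    inf_le_inf_left _ (principal_mono.2 fun k hk => ⟨hk.1.le, hk.2.le⟩)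
  have hg' : IntervalIntegrable g volume 0 t :=
    (intervalIntegrable_iff_integrableOn_Icc_of_le ht.le).2 hg
  exact (tendsto_expKernelIntegral ht.le hg').comp
    (tendsto_sq_cobounded_inf_quadrant.mono_left hquadrant)
end

section
/- Let q < 0 and suppose û₀⁽¹⁾, û₀⁽²⁾ are continuous on ℝ with |û₀⁽ʲ⁾(k)| ≤ C/(1+k²). Then for each fixed x ∈ ℝ, the integral u(x,t) = (1/2π)∫ e^{ikx−ik²t} û₀⁽¹⁾(k) dk − (1/2π)∫ e^{ikx−ik²t} (iq e^{-2ika} û₀⁽¹⁾(−k) − k û₀⁽²⁾(k))/(iq+k) dk satisfies u(x,t) → 0 as t → +∞. -/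
/-!
Both integrands are integrable: the first by the quadratic decay, the second because
`|q|, |k| ≤ |iq + k|`. For integrable `f`, folding `k ↦ -k` and substituting `u = k²` turns
`∫ e^{-ik²t} f(k) dk` into `∫ e^{-iut} g(u) du` with `g(u) = (f(√u) + f(-√u)) / (2√u)` on
`u > 0`, i.e. a Fourier transform of `g` at `t / 2π`, which tends to `0` by Riemann–Lebesgue.
-/

open MeasureTheory Filter Set Complex Real Topology

theorem integrable_of_norm_le_div_one_add_sq {E : Type*} [NormedAddCommGroup E] {f : ℝ → E}
    (hf : AEStronglyMeasurable f) {C : ℝ} (hb : ∀ k, ‖f k‖ ≤ C / (1 + k ^ 2)) : Integrable f :=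
  (integrable_inv_one_add_sq.const_mul C).mono' hf
    (Eventually.of_forall fun k => by simpa only [div_eq_mul_inv] using hb k)

theorem norm_I_mul_ofReal_mul_sub_ofReal_mul_div_le (q k : ℝ) (z w : ℂ) :
    ‖(I * q * z - k * w) / (I * q + k)‖ ≤ ‖z‖ + ‖w‖ := by
  rcases eq_or_ne (I * q + k) 0 with hzero | hne
  · rw [hzero, div_zero, norm_zero]
    positivity
  have hq : |q| ≤ ‖I * q + k‖ := by simpa using abs_im_le_norm (I * q + k)
  have hk : |k| ≤ ‖I * q + k‖ := by simpa using abs_re_le_norm (I * q + k)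
  rw [norm_div, div_le_iff₀ (norm_pos_iff.2 hne)]
  calc ‖I * q * z - k * w‖ ≤ |q| * ‖z‖ + |k| * ‖w‖ := by
        simpa using norm_sub_le (I * q * z) (k * w)
    _ ≤ ‖I * q + k‖ * ‖z‖ + ‖I * q + k‖ * ‖w‖ := by gcongr
    _ = (‖z‖ + ‖w‖) * ‖I * q + k‖ := by ring

theorem integral_eq_integral_Ioi_add_comp_neg {E : Type*} [NormedAddCommGroup E]
    [NormedSpace ℝ E] {f : ℝ → E} (hf : Integrable f) :
    ∫ x, f x = ∫ x in Ioi 0, (f x + f (-x)) := by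
  rw [integral_add hf.integrableOn hf.comp_neg.integrableOn, integral_comp_neg_Ioi, neg_zero,
    add_comm, intervalIntegral.integral_Iic_add_Ioi hf.integrableOn hf.integrableOn]

theorem integral_Ioi_eq_integral_Ioi_comp_sqrt {E : Type*} [NormedAddCommGroup E]
    [NormedSpace ℝ E] (f : ℝ → E) :
    ∫ x in Ioi 0, f x = ∫ y in Ioi 0, (2 * √y)⁻¹ • f √y := by
  rw [← integral_comp_rpow_Ioi_of_pos (g := fun y => (2 * √y)⁻¹ • f √y) two_pos]
  refine setIntegral_congr_fun measurableSet_Ioi fun x (hx : 0 < x) => ?_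
  have h2x : (2 * x) ≠ 0 := by positivity
  rw [rpow_two, sqrt_sq hx.le, show (2 : ℝ) - 1 = 1 by norm_num, rpow_one, smul_smul,
    mul_inv_cancel₀ h2x, one_smul]

-- No integrability is needed: for non-integrable `g` every integral is `0`.
theorem tendsto_integral_exp_mul_atTop (g : ℝ → ℂ) :
    Tendsto (fun t : ℝ => ∫ y : ℝ, cexp (-(I * y * t)) * g y) atTop (𝓝 0) := by
  have hscale : Tendsto (fun t : ℝ => t / (2 * π)) atTop (cocompact ℝ) :=
    (tendsto_id.atTop_div_const (by positivity)).mono_right atTop_le_cocompact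
  refine ((Real.zero_at_infty_fourier g).comp hscale).congr fun t => ?_
  rw [Function.comp_apply, Real.fourier_real_eq_integral_exp_smul]
  congr 1 with y
  rw [smul_eq_mul]
  congr 2
  push_cast
  field_simp

theorem tendsto_integral_exp_mul_sq_mul {f : ℝ → ℂ} (hf : Integrable f) :
    Tendsto (fun t : ℝ => ∫ k : ℝ, cexp (-(I * k ^ 2 * t)) * f k) atTop (𝓝 0) := by
  refine (tendsto_integral_exp_mul_atTop
    ((Ioi 0).indicator fun y => (2 * √y)⁻¹ • (f √y + f (-√y)))).congr fun t => ?_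
  have hint : Integrable fun k : ℝ => cexp (-(I * k ^ 2 * t)) * f k :=
    hf.bdd_mul (c := 1) (by fun_prop)
      (Eventually.of_forall fun k => by simp [norm_exp, ← ofReal_pow])
  calc _ = ∫ y in Ioi (0 : ℝ), cexp (-(I * y * t)) * ((2 * √y)⁻¹ • (f √y + f (-√y))) := by
        rw [← integral_indicator measurableSet_Ioi]
        simp_rw [indicator_mul_right]
    _ = ∫ y in Ioi (0 : ℝ), (2 * √y)⁻¹ • (cexp (-(I * (√y : ℝ) ^ 2 * t)) *
          (f √y + f (-√y))) := by
        refine setIntegral_congr_fun measurableSet_Ioi fun y (hy : 0 < y) => ?_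
        rw [← ofReal_pow, sq_sqrt hy.le, mul_smul_comm]
    _ = ∫ k in Ioi (0 : ℝ), cexp (-(I * k ^ 2 * t)) * (f k + f (-k)) :=
        (integral_Ioi_eq_integral_Ioi_comp_sqrt
          fun k : ℝ => cexp (-(I * k ^ 2 * t)) * (f k + f (-k))).symm
    _ = ∫ k : ℝ, cexp (-(I * k ^ 2 * t)) * f k := by
        rw [integral_eq_integral_Ioi_add_comp_neg hint]
        simp only [ofReal_neg, neg_sq, mul_add]

theorem tendsto_integral_exp_mul_sub_sq_mul {h : ℝ → ℂ} (hh : Integrable h) (x : ℝ) :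
    Tendsto (fun t : ℝ => ∫ k : ℝ, cexp (I * k * x - I * k ^ 2 * t) * h k) atTop (𝓝 0) := by
  have hxh : Integrable fun k : ℝ => cexp (I * k * x) * h k :=
    hh.bdd_mul (c := 1) (by fun_prop) (Eventually.of_forall fun k => by simp [norm_exp])
  refine (tendsto_integral_exp_mul_sq_mul hxh).congr fun t => ?_
  congr 1 with k
  rw [sub_eq_add_neg, Complex.exp_add]
  ring

theorem long_time_decay_q_neg_general (q a : ℝ) (u1hat u2hat : ℝ → ℂ)
    (h1c : Continuous u1hat) (h2c : Continuous u2hat) (C : ℝ)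
    (hb1 : ∀ k : ℝ, ‖u1hat k‖ ≤ C / (1 + k ^ 2))
    (hb2 : ∀ k : ℝ, ‖u2hat k‖ ≤ C / (1 + k ^ 2)) (x : ℝ) :
    Tendsto
      (fun t : ℝ =>
        (1 / (2 * Real.pi) : ℂ) *
            (∫ k : ℝ, Complex.exp (Complex.I * (k : ℂ) * (x : ℂ)
              - Complex.I * (k : ℂ) ^ 2 * (t : ℂ)) * u1hat k)
          - (1 / (2 * Real.pi) : ℂ) *
            ∫ k : ℝ, Complex.exp (Complex.I * (k : ℂ) * (x : ℂ)
                - Complex.I * (k : ℂ) ^ 2 * (t : ℂ)) *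
              ((Complex.I * (q : ℂ) * Complex.exp (-2 * Complex.I * (k : ℂ) * (a : ℂ)) *
                  u1hat (-k) - (k : ℂ) * u2hat k) / (Complex.I * (q : ℂ) + (k : ℂ))))
      atTop (nhds 0) := by
  have hu1 := integrable_of_norm_le_div_one_add_sq h1c.aestronglyMeasurable hb1
  have hu2 := integrable_of_norm_le_div_one_add_sq h2c.aestronglyMeasurable hb2
  have hmeas : Measurable fun k : ℝ => (I * q * cexp (-2 * I * k * a) * u1hat (-k)
      - k * u2hat k) / (I * q + k) := by
    have := h1c.measurable
    have := h2c.measurable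
    fun_prop
  have hint : Integrable fun k : ℝ => (I * q * cexp (-2 * I * k * a) * u1hat (-k)
      - k * u2hat k) / (I * q + k) := by
    refine (hu1.comp_neg.norm.add hu2.norm).mono' hmeas.aestronglyMeasurable
      (Eventually.of_forall fun k => ?_)
    simpa [mul_assoc, norm_exp] using
      norm_I_mul_ofReal_mul_sub_ofReal_mul_div_le q k (cexp (-2 * I * k * a) * u1hat (-k))
        (u2hat k)
  simpa using ((tendsto_integral_exp_mul_sub_sq_mul hu1 x).const_mul _).sub
    ((tendsto_integral_exp_mul_sub_sq_mul hint x).const_mul _)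

/-- For `q < 0` and continuous `û₀⁽¹⁾, û₀⁽²⁾` with quadratic decay, for each
fixed `x` the solution formula tends to `0` as `t → +∞`. -/
theorem long_time_decay_q_neg (q a : ℝ) (hq : q < 0) (u1hat u2hat : ℝ → ℂ)
    (h1c : Continuous u1hat) (h2c : Continuous u2hat) (C : ℝ)
    (hb1 : ∀ k : ℝ, ‖u1hat k‖ ≤ C / (1 + k ^ 2))
    (hb2 : ∀ k : ℝ, ‖u2hat k‖ ≤ C / (1 + k ^ 2)) (x : ℝ) :
    Tendsto
      (fun t : ℝ =>
        (1 / (2 * Real.pi) : ℂ) *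
            (∫ k : ℝ, Complex.exp (Complex.I * (k : ℂ) * (x : ℂ)
              - Complex.I * (k : ℂ) ^ 2 * (t : ℂ)) * u1hat k)
          - (1 / (2 * Real.pi) : ℂ) *
            ∫ k : ℝ, Complex.exp (Complex.I * (k : ℂ) * (x : ℂ)
                - Complex.I * (k : ℂ) ^ 2 * (t : ℂ)) *
              ((Complex.I * (q : ℂ) * Complex.exp (-2 * Complex.I * (k : ℂ) * (a : ℂ)) *
                  u1hat (-k) - (k : ℂ) * u2hat k) / (Complex.I * (q : ℂ) + (k : ℂ))))
      atTop (nhds 0) :=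
  long_time_decay_q_neg_general q a u1hat u2hat h1c h2c C hb1 hb2 x
end
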